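/- Let a_pp, a_pq, a_qq be reals with a_pq ≠ 0, let D = √((a_qq - a_pp)² + 4 a_pq²), x₀ the root of f(x) = (a_qq - a_pp)√(1/4 - x²) + 2 a_pq x in (-1/2, 1/2), and B = H(x₀)ᵀ M H(x₀) (a diagonal matrix with entries λ₁, λ₂). Then λ₁² + λ₂² = a_pp² + a_qq² + 2 a_pq², i.e., the sum of squares of diagonal entries increases by exactly 2 a_pq² after the transformation. -/
import Mathlib


open Matrix

theorem stmt15 (app apq aqq : ℝ) (h : apq ≠ 0) (x₀ : ℝ)
    (hx₀ : x₀ ∈ Set.Ioo (-(1/2) : ℝ) (1/2))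
    (hroot : (aqq - app) * Real.sqrt (1/4 - x₀^2) + 2 * apq * x₀ = 0) :
    let H : Matrix (Fin 2) (Fin 2) ℝ :=
      !![Real.sqrt (x₀ + 1/2), (-Real.sqrt (1/2 - x₀));
         Real.sqrt (1/2 - x₀), Real.sqrt (x₀ + 1/2)]
    let M : Matrix (Fin 2) (Fin 2) ℝ := !![app, apq; apq, aqq]
    let B := Hᵀ * M * H
    (B 0 0)^2 + (B 1 1)^2 = app^2 + aqq^2 + 2 * apq^2 := by
  obtain ⟨h1, h2⟩ := hx₀
  intro H M B
  have hc2 : Real.sqrt (x₀ + 1/2) ^ 2 = x₀ + 1/2 :=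
    Real.sq_sqrt (by linarith)
  have hs2 : Real.sqrt (1/2 - x₀) ^ 2 = 1/2 - x₀ :=
    Real.sq_sqrt (by linarith)
  have hcs : Real.sqrt (x₀ + 1/2) * Real.sqrt (1/2 - x₀) = Real.sqrt (1/4 - x₀^2) := by
    rw [← Real.sqrt_mul (by linarith)]
    ring_nf
  have ht2 : Real.sqrt (1/4 - x₀^2) ^ 2 = 1/4 - x₀^2 :=
    Real.sq_sqrt (by nlinarith)
  set c := Real.sqrt (x₀ + 1/2) with hc
  set s := Real.sqrt (1/2 - x₀) with hs
  set t := Real.sqrt (1/4 - x₀^2) with ht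
  have hHT : Hᵀ = !![c, s; -s, c] := by
    ext i j
    fin_cases i <;> fin_cases j <;> simp [H, hc, hs] <;> norm_num
  have hB : B = !![c, s; -s, c] * M * H := by
    show Hᵀ * M * H = _
    rw [hHT]
  have hB00 : B 0 0 = app * c^2 + 2 * apq * (c*s) + aqq * s^2 := by
    rw [hB]
    simp [M, H, Matrix.mul_apply, Fin.sum_univ_two, hc, hs]
    ring
  have hB11 : B 1 1 = app * s^2 - 2 * apq * (c*s) + aqq * c^2 := by
    rw [hB]
    simp [M, H, Matrix.mul_apply, Fin.sum_univ_two, hc, hs]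
    ring
  rw [hB00, hB11]
  linear_combination
    ((app^2+aqq^2)*(c^2+x₀+1/2) + 4*app*aqq*s^2 + 4*apq*(app-aqq)*t + 8*apq^2*s^2) * hc2
    + ((app^2+aqq^2)*(s^2+1/2-x₀) + 4*app*aqq*(x₀+1/2) - 4*apq*(app-aqq)*t + 8*apq^2*(x₀+1/2)) * hs2
    + 2*(app-aqq)^2 * ht2
    + 4*apq*(app-aqq)*(c^2-s^2) * hcs
    + (2*(app-aqq)*t - 4*apq*x₀) * hroot
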